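/- For every partition p of a finite nonempty set X there exists a partition q of X with p ⊥ q. Concretely, choosing one representative from each block of p and letting q consist of the block of all representatives together with singletons for all remaining elements yields a partition orthogonal to p. -/

import Mathlib

/-! Multigraphs: a multigraph is given by a vertex type, an edge index type,
and two endpoint maps. -/
structure Multigraph (V : Type*) (E : Type*) where
  fst : E → V
  snd : E → V

namespace Multigraph

variable {V E : Type*} (G : Multigraph V E)

/-- `u` and `v` are joined by some edge. -/
def Adj (u v : V) : Prop :=
  ∃ e, (G.fst e = u ∧ G.snd e = v) ∨ (G.fst e = v ∧ G.snd e = u)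

/-- Reachability by walks. -/
def Reachable (u v : V) : Prop := Relation.ReflTransGen G.Adj u v

/-- A multigraph is connected if it is nonempty and every two vertices are
joined by a walk. -/
def Connected : Prop := Nonempty V ∧ ∀ u v : V, G.Reachable u v

/-- A multigraph contains a cycle iff it contains a nontrivial closed trail
(a closed walk with pairwise distinct edges); in particular a pair of parallel
edges is a cycle. -/
def HasCycle : Prop :=
  ∃ (n : ℕ) (v : Fin (n + 1) → V) (e : Fin n → E),
    1 ≤ n ∧ Function.Injective e ∧
    (∀ i : Fin n,
      (G.fst (e i) = v i.castSucc ∧ G.snd (e i) = v i.succ) ∨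
      (G.fst (e i) = v i.succ ∧ G.snd (e i) = v i.castSucc)) ∧
    v 0 = v (Fin.last n)

/-- A multigraph is acyclic if it contains no cycle. -/
def Acyclic : Prop := ¬ G.HasCycle

/-- Number of connected components. -/
noncomputable def numComponents : ℕ := Nat.card (Quot G.Reachable)

end Multigraph

/-- A partition of the finite set `X`. -/
abbrev Partn (X : Type*) [Fintype X] [DecidableEq X] := Finpartition (Finset.univ : Finset X)

namespace Partn

variable {X : Type*} [Fintype X] [DecidableEq X]

/-- The block of `p` containing `i`. -/
noncomputable def blk (p : Partn X) (i : X) : Finset X :=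
  p.parts.choose (i ∈ ·) (p.existsUnique_mem (Finset.mem_univ i))

lemma blk_mem (p : Partn X) (i : X) : p.blk i ∈ p.parts :=
  Finset.choose_mem _ _ _

lemma mem_blk (p : Partn X) (i : X) : i ∈ p.blk i :=
  Finset.choose_property (i ∈ ·) _ _

end Partn

/-- The incidence graph of two partitions `p`, `q` of `X`: vertices are the
blocks of `p` together with the blocks of `q`, and each element `i ∈ X`
contributes one edge joining the `p`-block and the `q`-block containing it. -/
noncomputable def IncGraph {X : Type*} [Fintype X] [DecidableEq X] (p q : Partn X) :
    Multigraph ({b // b ∈ p.parts} ⊕ {b // b ∈ q.parts}) X where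
  fst i := Sum.inl ⟨p.blk i, p.blk_mem i⟩
  snd i := Sum.inr ⟨q.blk i, q.blk_mem i⟩

/-- Weak orthogonality: the incidence graph is acyclic. -/
def WOrth {X : Type*} [Fintype X] [DecidableEq X] (p q : Partn X) : Prop :=
  (IncGraph p q).Acyclic

/-- Orthogonality: the incidence graph is connected and acyclic. -/
def Orth {X : Type*} [Fintype X] [DecidableEq X] (p q : Partn X) : Prop :=
  (IncGraph p q).Connected ∧ (IncGraph p q).Acyclic

/-! Write `R` for the set of representatives and `q` for the partition with the block `R` and
singletons elsewhere. Every block of `p` contains an element of `R`, so it is joined to the vertex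
`R`, and every singleton `{x}` is joined to the block of `p` containing `x`: the incidence graph is
connected. In a cycle every edge shares each of its endpoints with another edge of the cycle. An
element `x ∉ R` is the only element of its `q`-block `{x}`, so all edges of a cycle lie in `R`; but
two distinct elements of `R` never share a block of `p`. -/

namespace Multigraph

variable {V E : Type*} (G : Multigraph V E)

def Joins (e : E) (a b : V) : Prop :=
  (G.fst e = a ∧ G.snd e = b) ∨ (G.fst e = b ∧ G.snd e = a)

def IsIncident (e : E) (w : V) : Prop := G.fst e = w ∨ G.snd e = w

variable {G}

lemma Joins.isIncident_left {e : E} {a b : V} (h : G.Joins e a b) : G.IsIncident e a := by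
  rcases h with ⟨h, -⟩ | ⟨-, h⟩ <;> [exact Or.inl h; exact Or.inr h]

lemma Joins.isIncident_right {e : E} {a b : V} (h : G.Joins e a b) : G.IsIncident e b := by
  rcases h with ⟨-, h⟩ | ⟨h, -⟩ <;> [exact Or.inr h; exact Or.inl h]

lemma Joins.eq_or_eq_of_isIncident {e : E} {a b w : V} (h : G.Joins e a b)
    (hw : G.IsIncident e w) : w = a ∨ w = b := by
  rcases h with ⟨ha, hb⟩ | ⟨hb, ha⟩ <;> rcases hw with rfl | rfl <;> simp_all

lemma HasCycle.exists_cyclic (h : G.HasCycle) :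
    ∃ (m : ℕ) (u : Fin (m + 1) → V) (e : Fin (m + 1) → E),
      Function.Injective e ∧ ∀ i, G.Joins (e i) (u i) (u (i + 1)) := by
  obtain ⟨n, v, e, hn, einj, hjoin, hclose⟩ := h
  obtain ⟨m, rfl⟩ := Nat.exists_eq_add_of_le' hn
  refine ⟨m, fun i => v i.castSucc, e, einj, fun i => ?_⟩
  suffices v i.succ = v (i + 1).castSucc by simpa only [Joins, ← this] using hjoin i
  by_cases hi : i = Fin.last m
  · subst hi
    simpa using hclose.symm
  · congr 1
    ext
    simp [Fin.val_add_one, hi]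

lemma HasCycle.exists_forall_exists_ne_isIncident (hloop : ∀ e, G.fst e ≠ G.snd e)
    (h : G.HasCycle) :
    ∃ S : Set E, S.Nonempty ∧
      ∀ e ∈ S, ∀ w, G.IsIncident e w → ∃ e' ∈ S, e' ≠ e ∧ G.IsIncident e' w := by
  obtain ⟨m, u, e, einj, hjoin⟩ := h.exists_cyclic
  have hm : m ≠ 0 := by
    rintro rfl
    rcases hjoin 0 with ⟨h₁, h₂⟩ | ⟨h₁, h₂⟩ <;> exact hloop (e 0) (by simp_all)
  refine ⟨Set.range e, ⟨e 0, 0, rfl⟩, ?_⟩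
  rintro _ ⟨i, rfl⟩ w hw
  rcases (hjoin i).eq_or_eq_of_isIncident hw with rfl | rfl
  · refine ⟨e (i - 1), ⟨_, rfl⟩, einj.ne (by simp [Fin.one_eq_zero_iff, hm]), ?_⟩
    simpa using (hjoin (i - 1)).isIncident_right
  · exact ⟨e (i + 1), ⟨_, rfl⟩, einj.ne (by simp [Fin.one_eq_zero_iff, hm]),
      (hjoin (i + 1)).isIncident_left⟩

lemma Adj.symm {u v : V} (h : G.Adj u v) : G.Adj v u :=
  let ⟨e, he⟩ := h; ⟨e, he.symm⟩

lemma Reachable.symm {u v : V} (h : G.Reachable u v) : G.Reachable v u :=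
  Relation.ReflTransGen.mono (fun _ _ => Adj.symm) _ _ (Relation.ReflTransGen.swap _ _ h)

lemma connected_of_forall_reachable (w : V) (h : ∀ v, G.Reachable v w) : G.Connected :=
  ⟨⟨w⟩, fun u v => (h u).trans (h v).symm⟩

end Multigraph

namespace Partn

variable {X : Type*} [Fintype X] [DecidableEq X]

lemma blk_eq_part (p : Partn X) (i : X) : p.blk i = p.part i :=
  (p.part_eq_of_mem (p.blk_mem i) (p.mem_blk i)).symm

lemma blk_eq_of_mem (p : Partn X) {b : Finset X} {i : X} (hb : b ∈ p.parts) (hi : i ∈ b) :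
    p.blk i = b := by
  rw [blk_eq_part, p.part_eq_of_mem hb hi]

noncomputable def collapse (R : Finset X) : Partn X :=
  @Finpartition.ofSetoid X _ _
    ⟨fun i j => i = j ∨ (i ∈ R ∧ j ∈ R),
     ⟨fun _ => Or.inl rfl,
      fun h => by tauto,
      fun h h' => by rcases h with rfl | h <;> rcases h' with rfl | h' <;> tauto⟩⟩
    (Classical.decRel _)

lemma mem_blk_collapse {R : Finset X} {i j : X} :
    j ∈ (collapse R).blk i ↔ i = j ∨ (i ∈ R ∧ j ∈ R) := by
  classical
  rw [blk_eq_part]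
  exact Finpartition.mem_part_ofSetoid_iff_rel

lemma blk_collapse_of_mem {R : Finset X} {i : X} (hi : i ∈ R) : (collapse R).blk i = R := by
  ext j
  simp only [mem_blk_collapse, hi, true_and]
  exact or_iff_right_of_imp (· ▸ hi)

lemma blk_collapse_of_notMem {R : Finset X} {i : X} (hi : i ∉ R) :
    (collapse R).blk i = {i} := by
  ext j
  simp [mem_blk_collapse, hi, eq_comm]

end Partn

section IncGraph

variable {X : Type*} [Fintype X] [DecidableEq X] {p q : Partn X}

lemma incGraph_isIncident_inl {x : X} {b : {b // b ∈ p.parts}} :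
    (IncGraph p q).IsIncident x (Sum.inl b) ↔ p.blk x = b := by
  simp [Multigraph.IsIncident, IncGraph, Subtype.ext_iff]

lemma incGraph_isIncident_inr {x : X} {c : {c // c ∈ q.parts}} :
    (IncGraph p q).IsIncident x (Sum.inr c) ↔ q.blk x = c := by
  simp [Multigraph.IsIncident, IncGraph, Subtype.ext_iff]

lemma exists_forall_exists_ne_blk_eq_of_hasCycle (h : (IncGraph p q).HasCycle) :
    ∃ S : Set X, S.Nonempty ∧ ∀ x ∈ S,
      (∃ y ∈ S, y ≠ x ∧ p.blk y = p.blk x) ∧ (∃ y ∈ S, y ≠ x ∧ q.blk y = q.blk x) := by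
  obtain ⟨S, hS, hdeg⟩ :=
    h.exists_forall_exists_ne_isIncident fun _ => Sum.inl_ne_inr
  refine ⟨S, hS, fun x hx => ⟨?_, ?_⟩⟩
  · simpa only [incGraph_isIncident_inl] using
      hdeg x hx (Sum.inl ⟨p.blk x, p.blk_mem x⟩) (incGraph_isIncident_inl.2 rfl)
  · simpa only [incGraph_isIncident_inr] using
      hdeg x hx (Sum.inr ⟨q.blk x, q.blk_mem x⟩) (incGraph_isIncident_inr.2 rfl)

lemma incGraph_connected_of_forall_inter_nonempty {c : Finset X} (hc : c ∈ q.parts)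
    (h : ∀ b ∈ p.parts, (b ∩ c).Nonempty) : (IncGraph p q).Connected := by
  have hub : ∀ b : {b // b ∈ p.parts}, (IncGraph p q).Adj (Sum.inl b) (Sum.inr ⟨c, hc⟩) := by
    rintro ⟨b, hb⟩
    obtain ⟨x, hx⟩ := h b hb
    rw [Finset.mem_inter] at hx
    exact ⟨x, Or.inl ⟨by simp [IncGraph, p.blk_eq_of_mem hb hx.1],
      by simp [IncGraph, q.blk_eq_of_mem hc hx.2]⟩⟩
  refine Multigraph.connected_of_forall_reachable (Sum.inr ⟨c, hc⟩) ?_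
  rintro (b | ⟨c', hc'⟩)
  · exact .single (hub b)
  · obtain ⟨x, hx⟩ := q.nonempty_of_mem_parts hc'
    have hx' : (IncGraph p q).Adj (Sum.inr ⟨c', hc'⟩) (Sum.inl ⟨p.blk x, p.blk_mem x⟩) :=
      ⟨x, Or.inr ⟨rfl, by simp [IncGraph, q.blk_eq_of_mem hc' hx]⟩⟩
    exact .head hx' (.single (hub _))

end IncGraph

namespace Partn

variable {X : Type*} [Fintype X] [DecidableEq X] {p : Partn X} {R : Finset X}

lemma acyclic_incGraph_collapse (hR : Set.InjOn p.blk R) :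
    (IncGraph p (collapse R)).Acyclic := by
  intro h
  obtain ⟨S, ⟨x, hx⟩, hS⟩ := exists_forall_exists_ne_blk_eq_of_hasCycle h
  have hSR : ∀ y ∈ S, y ∈ R := by
    intro y hy
    by_contra hyR
    obtain ⟨z, -, hzy, hz⟩ := (hS y hy).2
    rw [blk_collapse_of_notMem hyR] at hz
    exact hzy (Finset.mem_singleton.1 (hz ▸ (collapse R).mem_blk z))
  obtain ⟨y, hy, hyx, hxy⟩ := (hS x hx).1
  exact hyx (hR (hSR y hy) (hSR x hx) hxy)

lemma connected_incGraph_collapse [Nonempty X] (hR : ∀ b ∈ p.parts, (b ∩ R).Nonempty) :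
    (IncGraph p (collapse R)).Connected := by
  obtain ⟨x⟩ := ‹Nonempty X›
  obtain ⟨r, hr⟩ := hR _ (p.blk_mem x)
  have hRq : R ∈ (collapse R).parts := by
    simpa only [blk_collapse_of_mem (Finset.mem_inter.1 hr).2] using (collapse R).blk_mem r
  exact incGraph_connected_of_forall_inter_nonempty hRq hR

lemma orth_collapse [Nonempty X] (hcover : ∀ b ∈ p.parts, (b ∩ R).Nonempty)
    (hinj : Set.InjOn p.blk R) : Orth p (collapse R) :=
  ⟨connected_incGraph_collapse hcover, acyclic_incGraph_collapse hinj⟩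

variable {rep : Finset X → X}

lemma inter_image_nonempty (hrep : ∀ b ∈ p.parts, rep b ∈ b) {b : Finset X}
    (hb : b ∈ p.parts) : (b ∩ p.parts.image rep).Nonempty :=
  ⟨rep b, Finset.mem_inter.2 ⟨hrep b hb, Finset.mem_image_of_mem _ hb⟩⟩

lemma injOn_blk_image (hrep : ∀ b ∈ p.parts, rep b ∈ b) :
    Set.InjOn p.blk (p.parts.image rep) := by
  intro x hx y hy hxy
  simp only [Finset.coe_image, Set.mem_image, Finset.mem_coe] at hx hy
  obtain ⟨b, hb, rfl⟩ := hx
  obtain ⟨c, hc, rfl⟩ := hy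
  rw [p.blk_eq_of_mem hb (hrep b hb), p.blk_eq_of_mem hc (hrep c hc)] at hxy
  rw [hxy]

end Partn

/-- every partition `p` of a finite nonempty set admits an
orthogonal partition; concretely, choosing a representative in each block of
`p` and taking the partition consisting of the block of all representatives
together with singletons for the remaining elements yields a partition
orthogonal to `p`. -/
theorem stmt8 {X : Type*} [Fintype X] [DecidableEq X] [Nonempty X] (p : Partn X) :
    (∃ q : Partn X, Orth p q) ∧
    ∀ rep : Finset X → X, (∀ b ∈ p.parts, rep b ∈ b) →
      Orth p (@Finpartition.ofSetoid X _ _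
        ⟨fun i j => i = j ∨ (i ∈ p.parts.image rep ∧ j ∈ p.parts.image rep),
         ⟨fun i => Or.inl rfl,
          fun h => by tauto,
          fun h h' => by rcases h with rfl | h <;> rcases h' with rfl | h' <;> tauto⟩⟩
        (Classical.decRel _)) := by
  have horth : ∀ rep : Finset X → X, (∀ b ∈ p.parts, rep b ∈ b) →
      Orth p (Partn.collapse (p.parts.image rep)) := fun rep hrep =>
    Partn.orth_collapse (fun _ => Partn.inter_image_nonempty hrep) (Partn.injOn_blk_image hrep)
  have hchoice : ∀ b : Finset X, ∃ x, b ∈ p.parts → x ∈ b := by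
    intro b
    by_cases hb : b ∈ p.parts
    · exact (p.nonempty_of_mem_parts hb).imp fun x hx _ => hx
    · exact ⟨Classical.arbitrary X, fun h => absurd h hb⟩
  choose rep hrep using hchoice
  exact ⟨⟨_, horth rep hrep⟩, horth⟩
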